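/- arXiv:2402.07952 — 4 statements merged into one kernel-verified Lean document; each statement's English description precedes it below -/
import Mathlib

section
/- Let a : ℕ → ℂ be an arbitrary sequence, let t, u ∈ ℂ, and let N ≥ 1 be an integer. Then the coefficient of q^N in the formal power series (over ℂ) ∑_{n=1}^{N} a(n) · t·u · q^n · (∏_{i=1}^{N} (1 − (1−u)·t·q^{n+i})) · (∏_{i=0}^{N} (1 − t·q^{n+i}))⁻¹ equals ∑_{π ∈ P(N)} t^{k(π)} u^{Q(π)} a(s(π)). (This is the coefficient-of-q^N form of Theorem 1 of the paper, ∑_{n≥1} a_n (tu((1−u)tq^{n+1})_∞/(tq^n)_∞) q^n = ∑_{n≥1} q^n ∑_{π∈P(n)} t^{k(π)} u^{Q(π)} a_{s(π)}, obtained by truncating the infinite q-Pochhammer products, which does not affect the coefficient of q^N.) -/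
/-!
For `m ≥ 1` one has `(1 - (1 - u) t q^m) / (1 - t q^m) = 1 + u ∑_{j ≥ 1} tʲ q^{mj}` and
`t u q^n / (1 - t q^n) = u ∑_{j ≥ 1} tʲ q^{nj}`. Hence the `n`-th term is `a n` times the difference
of the products of the factors `1 + u ∑_{j ≥ 1} tʲ q^{mj}` over `m ∈ [n, n + N]` and over
`m ∈ [n + 1, n + N]`, which are the generating functions (`Nat.Partition.genFun`) of the partitions
with all parts in these intervals, weighted by `t^{k(π)} u^{Q(π)}`. In degree `N ≥ 1` the
difference counts exactly the partitions whose smallest part is `n`.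
-/

open Finset PowerSeries

/-- `k(π)`: number of parts of the partition `π`, counted with multiplicity. -/
def kParts {n : ℕ} (π : n.Partition) : ℕ := Multiset.card π.parts

/-- `Q(π)`: number of distinct parts of the partition `π`. -/
def qParts {n : ℕ} (π : n.Partition) : ℕ := π.parts.toFinset.card

/-- `l(π)`: largest part of the partition `π` (`0` for the empty partition). -/
def lPart {n : ℕ} (π : n.Partition) : ℕ := π.parts.sup

/-- `s(π)`: smallest part of the partition `π` (`0` for the empty partition). -/
def sPart {n : ℕ} (π : n.Partition) : ℕ := WithTop.untopD 0 π.parts.toFinset.min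

open scoped PowerSeries.WithPiTopology

section Topological

variable {R : Type*} [CommRing R] [TopologicalSpace R] [IsTopologicalRing R] [T2Space R]

/-- `u ∑_{j ≥ 1} tʲ X^{ij}`: the parts equal to `i` of a partition, if there are any, weighted by
`t` per part and by `u` once for the distinct part `i`. -/
noncomputable def partSeries (t u : R) (i : ℕ) : R⟦X⟧ :=
  ∑' j, (u * t ^ (j + 1)) • X ^ (i * (j + 1))

theorem one_sub_C_mul_X_pow_mul_partSeries (t u : R) {i : ℕ} (hi : i ≠ 0) :
    (1 - C t * X ^ i) * partSeries t u i = C (t * u) * X ^ i := by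
  set g : ℕ → R⟦X⟧ := fun j ↦ (u * t ^ (j + 1)) • X ^ (i * (j + 1))
  have hg : Summable g := Nat.Partition.summable_genFun_term' (fun _ c ↦ u * t ^ c) hi
  have hshift : ∀ j, C t * X ^ i * g j = g (j + 1) := fun j ↦ by
    simp only [g, smul_eq_C_mul, map_mul, map_pow]; ring
  calc (1 - C t * X ^ i) * partSeries t u i = ∑' j, g j - ∑' j, g (j + 1) := by
        rw [partSeries, sub_mul, one_mul, ← hg.tsum_mul_left]
        simp_rw [hshift]
        rfl
    _ = g 0 := by rw [hg.tsum_eq_zero_add]; abel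
    _ = C (t * u) * X ^ i := by simp [g, smul_eq_C_mul]; ring

theorem one_sub_C_mul_X_pow_mul_one_add_partSeries (t u : R) {i : ℕ} (hi : i ≠ 0) :
    (1 - C t * X ^ i) * (1 + partSeries t u i) = 1 - C ((1 - u) * t) * X ^ i := by
  rw [mul_add, mul_one, one_sub_C_mul_X_pow_mul_partSeries t u hi]
  simp only [map_sub, map_mul, map_one]
  ring

theorem genFun_ite_mem_eq_prod (t u : R) {s : Finset ℕ} (hs : 0 ∉ s) :
    Nat.Partition.genFun (fun i c ↦ if i ∈ s then u * t ^ c else 0) =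
      ∏ i ∈ s, (1 + partSeries t u i) := by
  have hg : ∀ i, (1 + ∑' j, (if i ∈ s then u * t ^ (j + 1) else 0) • X ^ (i * (j + 1)) : R⟦X⟧) =
      if i ∈ s then 1 + partSeries t u i else 1 := fun i ↦ by
    by_cases hi : i ∈ s
    · simp only [if_pos hi, partSeries]
    · simp only [if_neg hi, zero_smul, tsum_zero, add_zero]
  have hprod := HasProd.zero_mul (f := fun i ↦ if i ∈ s then 1 + partSeries t u i else 1)
    (by simpa only [hg] using Nat.Partition.hasProd_genFun fun i c ↦ if i ∈ s then u * t ^ c else 0)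
  rw [if_neg hs, one_mul] at hprod
  rw [hprod.unique (hasProd_prod_of_ne_finset_one fun i hi ↦ if_neg hi)]
  exact prod_congr rfl fun i hi ↦ if_pos hi

theorem coeff_prod_one_add_partSeries (t u : R) {s : Finset ℕ} (hs : 0 ∉ s) (N : ℕ) :
    coeff N (∏ i ∈ s, (1 + partSeries t u i)) =
      ∑ π : N.Partition, if ∀ p ∈ π.parts, p ∈ s then t ^ kParts π * u ^ qParts π else 0 := by
  rw [← genFun_ite_mem_eq_prod t u hs, Nat.Partition.coeff_genFun]
  refine sum_congr rfl fun π _ ↦ ?_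
  simp only [Finsupp.prod, Multiset.toFinsupp_support, Multiset.toFinsupp_apply]
  split_ifs with h
  · rw [prod_congr rfl fun i hi ↦ if_pos (h i (Multiset.mem_toFinset.mp hi)), prod_mul_distrib,
      prod_const, prod_pow_eq_pow_sum, Multiset.toFinset_sum_count_eq, kParts, qParts, mul_comm]
  · push Not at h
    obtain ⟨p, hp, hps⟩ := h
    exact prod_eq_zero (Multiset.mem_toFinset.mpr hp) (if_neg hps)

end Topological

section SmallestPart

variable {N : ℕ}

theorem toFinset_parts_nonempty (hN : N ≠ 0) (π : N.Partition) : π.parts.toFinset.Nonempty :=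
  Multiset.toFinset_nonempty.mpr fun h ↦ hN <| by simpa [h] using π.parts_sum.symm

theorem sPart_eq_min' (hN : N ≠ 0) (π : N.Partition) :
    sPart π = π.parts.toFinset.min' (toFinset_parts_nonempty hN π) := by
  rw [sPart, ← coe_min' (toFinset_parts_nonempty hN π)]
  rfl

theorem sPart_mem (hN : N ≠ 0) (π : N.Partition) : sPart π ∈ π.parts := by
  rw [sPart_eq_min' hN, ← Multiset.mem_toFinset]
  exact min'_mem _ _

theorem le_sPart_iff (hN : N ≠ 0) (π : N.Partition) (m : ℕ) :
    m ≤ sPart π ↔ ∀ p ∈ π.parts, m ≤ p := by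
  simp [sPart_eq_min' hN, le_min'_iff]

theorem forall_mem_parts_mem_Icc_iff (hN : N ≠ 0) (π : N.Partition) (m : ℕ) {M : ℕ}
    (hM : N ≤ M) :
    (∀ p ∈ π.parts, p ∈ Icc m M) ↔ m ≤ sPart π := by
  simp only [mem_Icc, le_sPart_iff hN]
  exact forall₂_congr fun p hp ↦ and_iff_left (Nat.Partition.le_of_mem_parts hp |>.trans hM)

theorem sPart_mem_Icc (hN : N ≠ 0) (π : N.Partition) : sPart π ∈ Icc 1 N :=
  mem_Icc.mpr ⟨π.parts_pos (sPart_mem hN π), Nat.Partition.le_of_mem_parts (sPart_mem hN π)⟩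

end SmallestPart

section Field

variable {k : Type*} [Field k] [TopologicalSpace k] [IsTopologicalRing k] [T2Space k]

theorem term_eq_C_mul_sub_prod (a t u : k) {n : ℕ} (hn : n ≠ 0) (N : ℕ) :
    C a * C (t * u) * X ^ n * (∏ i ∈ Icc 1 N, (1 - C ((1 - u) * t) * X ^ (n + i))) *
        (∏ i ∈ range (N + 1), (1 - C t * X ^ (n + i)))⁻¹ =
      C a * (∏ i ∈ Icc n (n + N), (1 + partSeries t u i) -
        ∏ i ∈ Icc (n + 1) (n + N), (1 + partSeries t u i)) := by
  have hD : constantCoeff (∏ i ∈ range (N + 1), (1 - C t * X ^ (n + i) : k⟦X⟧)) ≠ 0 := by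
    simp [map_prod, hn]
  have hshift : ∀ g : ℕ → k⟦X⟧, ∏ i ∈ Icc (n + 1) (n + N), g i = ∏ i ∈ Icc 1 N, g (n + i) :=
    fun g ↦ by rw [← map_add_left_Icc, prod_map]; rfl
  rw [eq_comm, eq_mul_inv_iff_mul_eq hD, range_eq_Ico, prod_eq_prod_Ico_succ_bot (by omega),
    zero_add, add_zero, Ico_add_one_right_eq_Icc,
    ← insert_Icc_add_one_left_eq_Icc (by omega : n ≤ n + N), prod_insert (by simp), hshift,
    mul_assoc (C a) (C (t * u)), ← one_sub_C_mul_X_pow_mul_partSeries t u hn,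
    prod_congr rfl fun i _ ↦
      (one_sub_C_mul_X_pow_mul_one_add_partSeries t u (i := n + i) (by omega)).symm,
    prod_mul_distrib]
  ring

theorem coeff_term_eq_sum_ite_sPart (a t u : k) {n N : ℕ} (hn : n ≠ 0) (hN : N ≠ 0) :
    coeff N (C a * C (t * u) * X ^ n * (∏ i ∈ Icc 1 N, (1 - C ((1 - u) * t) * X ^ (n + i))) *
        (∏ i ∈ range (N + 1), (1 - C t * X ^ (n + i)))⁻¹) =
      ∑ π : N.Partition, if sPart π = n then t ^ kParts π * u ^ qParts π * a else 0 := by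
  rw [term_eq_C_mul_sub_prod a t u hn, coeff_C_mul, map_sub,
    coeff_prod_one_add_partSeries t u (by simp [hn]), coeff_prod_one_add_partSeries t u (by simp),
    ← sum_sub_distrib, mul_sum]
  refine sum_congr rfl fun π _ ↦ ?_
  simp only [forall_mem_parts_mem_Icc_iff hN π _ (by omega : N ≤ n + N)]
  split_ifs <;> first | omega | ring

end Field

/-- Theorem 1 (coefficient-of-`q^N` form): the weighted partition generating function
for the smallest part. -/
theorem theorem1_coeff (a : ℕ → ℂ) (t u : ℂ) (N : ℕ) (hN : 1 ≤ N) :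
    PowerSeries.coeff N
      (∑ n ∈ Finset.Icc 1 N,
        PowerSeries.C (a n) * PowerSeries.C (t * u) * (PowerSeries.X : PowerSeries ℂ) ^ n *
          (∏ i ∈ Finset.Icc 1 N,
            (1 - PowerSeries.C ((1 - u) * t) * (PowerSeries.X : PowerSeries ℂ) ^ (n + i))) *
          (∏ i ∈ Finset.range (N + 1),
            (1 - PowerSeries.C t * (PowerSeries.X : PowerSeries ℂ) ^ (n + i)))⁻¹) =
    ∑ π : N.Partition, t ^ kParts π * u ^ qParts π * a (sPart π) := by
  have hN0 : N ≠ 0 := Nat.one_le_iff_ne_zero.mp hN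
  rw [map_sum, sum_congr rfl fun n hn ↦
      coeff_term_eq_sum_ite_sPart (a n) t u (Nat.one_le_iff_ne_zero.mp (mem_Icc.mp hn).1) hN0,
    sum_comm]
  exact sum_congr rfl fun π _ ↦ by rw [sum_ite_eq, if_pos (sPart_mem_Icc hN0 π)]
end

section
/- Let a : ℕ → ℂ be an arbitrary sequence, let t, u ∈ ℂ, and let N ≥ 1 be an integer. Then the coefficient of q^N in the formal power series (over ℂ) ∑_{n=1}^{N} a(n) · t·u · q^n · (∏_{i=1}^{n−1} (1 − (1−u)·t·q^{i})) · (∏_{i=1}^{n} (1 − t·q^{i}))⁻¹ equals ∑_{π ∈ P(N)} t^{k(π)} u^{Q(π)} a(l(π)). (This is the coefficient-of-q^N form of Theorem 2 of the paper, ∑_{n≥1} a_n (tu((1−u)tq)_{n−1}/(tq)_n) q^n = ∑_{n≥1} q^n ∑_{π∈P(n)} t^{k(π)} u^{Q(π)} a_{l(π)}; the terms with n > N are divisible by q^{n} and hence do not affect the coefficient of q^N.) -/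
open Finset PowerSeries

/-!
With `F i = (1 - (1 - u) t q^i) / (1 - t q^i) = 1 + u ∑_{c ≥ 1} t^c q^{ic}`, the partial product
`P m = ∏_{i ≤ m} F i` is the generating function (`Nat.Partition.genFun`) of partitions with
largest part at most `m`, weighted by `t^k(π) u^Q(π)`: a part size `i` occurring `c ≥ 1` times
contributes `u t^c`. The `n`-th summand of the theorem is `a n • (P n - P (n - 1))`, which
retains exactly the partitions with largest part `n`.
-/

open PowerSeries.WithPiTopology

theorem one_add_tsum_smul_X_pow_mul_one_sub {R : Type*} [CommRing R] [TopologicalSpace R]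
    [IsTopologicalRing R] [T2Space R] (t u : R) {i : ℕ} (hi : i ≠ 0) :
    (1 + ∑' j, (u * t ^ (j + 1)) • (X : R⟦X⟧) ^ (i * (j + 1))) * (1 - C t * X ^ i) =
      1 - C ((1 - u) * t) * X ^ i := by
  set g : R⟦X⟧ := C t * X ^ i
  have hg : constantCoeff g = 0 := by simp [g, hi]
  have hterm : ∀ j : ℕ, (u * t ^ (j + 1)) • (X : R⟦X⟧) ^ (i * (j + 1)) = C u * g * g ^ j := by
    intro j
    simp only [g, smul_eq_C_mul, map_mul, map_pow, pow_mul]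
    ring
  simp_rw [hterm]
  rw [(summable_pow_of_constantCoeff_eq_zero hg).tsum_mul_left _, add_mul, mul_assoc,
    tsum_pow_mul_one_sub_of_constantCoeff_eq_zero hg]
  simp only [g, map_mul, map_sub, map_one]
  ring

theorem Nat.Partition.toFinsupp_prod_ite_le {R : Type*} [CommSemiring R] {N : ℕ}
    (π : N.Partition) (t u : R) (m : ℕ) :
    π.parts.toFinsupp.prod (fun i c => if i ≤ m then u * t ^ c else 0) =
      if lPart π ≤ m then t ^ kParts π * u ^ qParts π else 0 := by
  classical
  simp only [Finsupp.prod, Multiset.toFinsupp_support, Multiset.toFinsupp_apply, prod_ite_zero,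
    lPart, Multiset.sup_le, Multiset.mem_toFinset]
  rw [prod_mul_distrib, prod_const, prod_pow_eq_pow_sum, Multiset.toFinset_sum_count_eq, kParts,
    qParts, mul_comm]

theorem Nat.Partition.genFun_ite_le_eq_prod {R : Type*} [CommSemiring R] [TopologicalSpace R]
    [T2Space R] (t u : R) (m : ℕ) :
    genFun (fun i c => if i ≤ m then u * t ^ c else 0) =
      ∏ i ∈ Icc 1 m, (1 + ∑' j, (u * t ^ (j + 1)) • (X : R⟦X⟧) ^ (i * (j + 1))) := by
  have hIcc : Icc 1 m = (range m).map (addRightEmbedding 1) := by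
    rw [range_eq_Ico, map_add_right_Ico, zero_add, Ico_add_one_right_eq_Icc]
  rw [genFun_eq_tprod, tprod_eq_prod (s := range m), hIcc, prod_map]
  · refine prod_congr rfl fun i hi => ?_
    simp [Nat.succ_le_of_lt (mem_range.mp hi)]
  · intro i hi
    simp [mem_range.not.mp hi]

section Field

variable {k : Type*} [Field k]

/-- `((1 - u) t q; q)_m / (t q; q)_m`. -/
noncomputable def qPochRatio (t u : k) (m : ℕ) : k⟦X⟧ :=
  (∏ i ∈ Icc 1 m, (1 - C ((1 - u) * t) * X ^ i)) * (∏ i ∈ Icc 1 m, (1 - C t * X ^ i))⁻¹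

theorem constantCoeff_prod_one_sub_C_mul_X_pow (t : k) (m : ℕ) :
    constantCoeff (∏ i ∈ Icc 1 m, (1 - C t * X ^ i)) = 1 := by
  rw [map_prod]
  exact prod_eq_one fun i hi => by simp [Nat.one_le_iff_ne_zero.mp (mem_Icc.mp hi).1]

theorem coeff_qPochRatio (t u : k) (m N : ℕ) :
    coeff N (qPochRatio t u m) =
      ∑ π : N.Partition, if lPart π ≤ m then t ^ kParts π * u ^ qParts π else 0 := by
  -- `genFun` lives in a topological ring; the discrete topology on `k` serves.
  let : TopologicalSpace k := ⊥
  have : DiscreteTopology k := ⟨rfl⟩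
  have h : qPochRatio t u m =
      Nat.Partition.genFun (fun i c => if i ≤ m then u * t ^ c else 0) := by
    rw [qPochRatio, eq_comm, eq_mul_inv_iff_mul_eq
      (by rw [constantCoeff_prod_one_sub_C_mul_X_pow]; exact one_ne_zero),
      Nat.Partition.genFun_ite_le_eq_prod, ← prod_mul_distrib]
    exact prod_congr rfl fun i hi =>
      one_add_tsum_smul_X_pow_mul_one_sub t u (Nat.one_le_iff_ne_zero.mp (mem_Icc.mp hi).1)
  simp only [h, Nat.Partition.coeff_genFun, Nat.Partition.toFinsupp_prod_ite_le]

theorem qPochRatio_sub_pred (t u : k) {n : ℕ} (hn : n ≠ 0) :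
    qPochRatio t u n - qPochRatio t u (n - 1) =
      C (t * u) * X ^ n * (∏ i ∈ Icc 1 (n - 1), (1 - C ((1 - u) * t) * X ^ i)) *
        (∏ i ∈ Icc 1 n, (1 - C t * X ^ i))⁻¹ := by
  obtain ⟨m, rfl⟩ := Nat.exists_eq_add_one_of_ne_zero hn
  have hB : (1 - C t * X ^ (m + 1) : k⟦X⟧) * (1 - C t * X ^ (m + 1))⁻¹ = 1 :=
    PowerSeries.mul_inv_cancel _ (by simp)
  simp only [qPochRatio, Nat.add_sub_cancel, prod_Icc_succ_top (Nat.le_add_left 1 m),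
    PowerSeries.mul_inv_rev, map_mul, map_sub, map_one]
  linear_combination (∏ i ∈ Icc 1 m, (1 - (1 - C u) * C t * X ^ i)) *
    (∏ i ∈ Icc 1 m, (1 - C t * X ^ i))⁻¹ * hB

end Field

theorem sum_Icc_mul_sum_ite_le_sub_pred {ι R : Type*} [Fintype ι] [CommRing R] (a : ℕ → R)
    (w : ι → R) (l : ι → ℕ) {N : ℕ} (hl : ∀ x, l x ∈ Icc 1 N) :
    ∑ n ∈ Icc 1 N, a n *
        ((∑ x, if l x ≤ n then w x else 0) - ∑ x, if l x ≤ n - 1 then w x else 0) =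
      ∑ x, w x * a (l x) := by
  have hdiff : ∀ n ∈ Icc 1 N,
      (∑ x, if l x ≤ n then w x else 0) - (∑ x, if l x ≤ n - 1 then w x else 0) =
        ∑ x, if l x = n then w x else 0 := by
    intro n hn
    rw [← sum_sub_distrib]
    refine sum_congr rfl fun x _ => ?_
    have := (mem_Icc.mp hn).1
    split_ifs <;> first | (exfalso; omega) | ring
  rw [sum_congr rfl fun n hn => by rw [hdiff n hn]]
  simp_rw [mul_sum, mul_ite, mul_zero]
  rw [sum_comm]
  exact sum_congr rfl fun x _ => by
    rw [sum_ite_eq _ _ (fun n => a n * w x), if_pos (hl x), mul_comm]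

theorem lPart_mem_Icc {N : ℕ} (hN : 1 ≤ N) (π : N.Partition) : lPart π ∈ Icc 1 N := by
  obtain ⟨j, hj⟩ : ∃ j, j ∈ π.parts := Multiset.exists_mem_of_ne_zero fun h => by
    have := π.parts_sum
    simp [h] at this
    omega
  exact mem_Icc.mpr ⟨(π.parts_pos hj).trans_le (Multiset.le_sup hj),
    Multiset.sup_le.mpr fun b hb => π.parts_sum ▸ Multiset.le_sum_of_mem hb⟩

/-- Theorem 2 (coefficient-of-`q^N` form): the weighted partition generating function
for the largest part. -/
theorem theorem2_coeff (a : ℕ → ℂ) (t u : ℂ) (N : ℕ) (hN : 1 ≤ N) :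
    PowerSeries.coeff N
      (∑ n ∈ Finset.Icc 1 N,
        PowerSeries.C (a n) * PowerSeries.C (t * u) * (PowerSeries.X : PowerSeries ℂ) ^ n *
          (∏ i ∈ Finset.Icc 1 (n - 1),
            (1 - PowerSeries.C ((1 - u) * t) * (PowerSeries.X : PowerSeries ℂ) ^ i)) *
          (∏ i ∈ Finset.Icc 1 n,
            (1 - PowerSeries.C t * (PowerSeries.X : PowerSeries ℂ) ^ i))⁻¹) =
    ∑ π : N.Partition, t ^ kParts π * u ^ qParts π * a (lPart π) := by
  have hterm : ∀ n ∈ Icc 1 N,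
      C (a n) * C (t * u) * (X : ℂ⟦X⟧) ^ n *
          (∏ i ∈ Icc 1 (n - 1), (1 - C ((1 - u) * t) * X ^ i)) *
          (∏ i ∈ Icc 1 n, (1 - C t * X ^ i))⁻¹ =
        C (a n) * (qPochRatio t u n - qPochRatio t u (n - 1)) := fun n hn => by
    rw [qPochRatio_sub_pred t u (Nat.one_le_iff_ne_zero.mp (mem_Icc.mp hn).1)]
    ring
  rw [sum_congr rfl hterm, map_sum]
  simp only [coeff_C_mul, map_sub, coeff_qPochRatio]
  exact sum_Icc_mul_sum_ite_le_sub_pred a _ lPart (lPart_mem_Icc hN)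
end

section
/- Let t, u ∈ ℂ, let m ≥ 1 be an integer, and let N ≥ 1 be an integer. Then the coefficient of q^N in the formal power series (over ℂ) t·u · q^m · (∏_{i=1}^{m−1} (1 − (1−u)·t·q^{i})) · (∏_{i=1}^{m} (1 − t·q^{i}))⁻¹ equals ∑_{π ∈ P(N), l(π) = m} t^{k(π)} u^{Q(π)}, the sum being over all partitions of N whose largest part equals m. (This is the generating-function identity, established in the proof of Theorem 2, for partitions with prescribed largest part.) -/
open Finset PowerSeries

/-!
Partitions of `N` with all parts at most `m`, weighted by `t ^ k(π) * u ^ Q(π)`, have generating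
function `G m = ∏_{i ≤ m} (1 + u ∑_{c ≥ 1} t^c q^{ic}) = ∏_{i ≤ m} (1 - (1 - u) t q^i) / (1 - t q^i)`:
each distinct part contributes one `u` and each copy one `t`. Those with largest part exactly `m`
are counted by `G m - G (m - 1) = G (m - 1) · u t q^m / (1 - t q^m)`, the series on the left.
-/

open scoped PowerSeries.WithPiTopology

namespace Nat.Partition

variable {R : Type*} [CommRing R] [TopologicalSpace R] [T2Space R]

theorem genFun_eq_prod_Icc {f : ℕ → ℕ → R} {m : ℕ} (hf : ∀ i c, m < i → f i c = 0) :
    genFun f = ∏ i ∈ Icc 1 m, (1 + ∑' j, f i (j + 1) • X ^ (i * (j + 1))) := by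
  rw [genFun_eq_tprod, tprod_eq_prod (s := range m)
    (fun i hi ↦ by simp [hf _ _ (by simpa using hi : m < i + 1)]),
    range_eq_Ico, prod_Ico_add'
      (fun i ↦ 1 + ∑' j, f i (j + 1) • (X : R⟦X⟧) ^ (i * (j + 1))), Ico_add_one_right_eq_Icc]

end Nat.Partition

namespace PowerSeries

variable {R : Type*} [CommRing R] [TopologicalSpace R] [IsTopologicalRing R] [T2Space R]

theorem one_sub_C_mul_X_pow_mul_one_add_tsum (t u : R) {i : ℕ} (hi : i ≠ 0) :
    (1 - C t * X ^ i) * (1 + ∑' j, (t ^ (j + 1) * u) • (X : R⟦X⟧) ^ (i * (j + 1))) =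
      1 - C ((1 - u) * t) * X ^ i := by
  set g : R⟦X⟧ := C t * X ^ i
  have hg : constantCoeff g = 0 := by simp [g, hi]
  have hterm (j : ℕ) : (t ^ (j + 1) * u) • (X : R⟦X⟧) ^ (i * (j + 1)) = C u * g * g ^ j := by
    simp only [smul_eq_C_mul, g, map_mul, map_pow, mul_pow, pow_mul, pow_succ]
    ring
  simp_rw [hterm]
  rw [(WithPiTopology.summable_pow_of_constantCoeff_eq_zero hg).tsum_mul_left]
  simp only [g, map_mul, map_sub, map_one]
  linear_combination (C u * g) * WithPiTopology.one_sub_mul_tsum_pow_of_constantCoeff_eq_zero hg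

end PowerSeries

section BoundedPartWeight

variable {R : Type*}

/-- A part `i ≤ m` occurring `c ≥ 1` times contributes `t ^ c * u`; `genFun` ignores `c = 0`. -/
def boundedPartWeight [CommSemiring R] (t u : R) (m i c : ℕ) : R :=
  if i ≤ m then t ^ c * u else 0

theorem boundedPartWeight_of_le [CommSemiring R] (t u : R) {m i : ℕ} (c : ℕ) (h : i ≤ m) :
    boundedPartWeight t u m i c = t ^ c * u :=
  if_pos h

theorem boundedPartWeight_of_lt [CommSemiring R] (t u : R) {m i : ℕ} (c : ℕ) (h : m < i) :
    boundedPartWeight t u m i c = 0 :=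
  if_neg h.not_ge

theorem lPart_le_iff {n : ℕ} (p : n.Partition) (m : ℕ) : lPart p ≤ m ↔ ∀ i ∈ p.parts, i ≤ m :=
  Multiset.sup_le

theorem toFinsupp_prod_boundedPartWeight [CommSemiring R] (t u : R) (m : ℕ) {n : ℕ}
    (p : n.Partition) :
    p.parts.toFinsupp.prod (boundedPartWeight t u m) =
      if lPart p ≤ m then t ^ kParts p * u ^ qParts p else 0 := by
  simp only [Finsupp.prod, Multiset.toFinsupp_support, Multiset.toFinsupp_apply]
  split_ifs with hm
  · rw [prod_congr rfl fun i hi ↦ boundedPartWeight_of_le t u _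
        ((lPart_le_iff p m).1 hm i (Multiset.mem_toFinset.1 hi)),
      prod_mul_distrib, prod_pow_eq_pow_sum, Multiset.toFinset_sum_count_eq, prod_const]
    rfl
  · obtain ⟨i, hi, him⟩ := not_forall₂.1 (mt (lPart_le_iff p m).2 hm)
    exact prod_eq_zero (Multiset.mem_toFinset.2 hi) (boundedPartWeight_of_lt t u _ (not_le.1 him))

theorem coeff_genFun_boundedPartWeight [CommSemiring R] (t u : R) (m n : ℕ) :
    coeff n (Nat.Partition.genFun (boundedPartWeight t u m)) =
      ∑ p ∈ univ.filter (fun p : n.Partition ↦ lPart p ≤ m), t ^ kParts p * u ^ qParts p := by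
  simp only [Nat.Partition.coeff_genFun, toFinsupp_prod_boundedPartWeight, sum_filter]

theorem genFun_boundedPartWeight_mul_prod [CommRing R] [TopologicalSpace R] [IsTopologicalRing R]
    [T2Space R] (t u : R) (m : ℕ) :
    Nat.Partition.genFun (boundedPartWeight t u m) * ∏ i ∈ Icc 1 m, (1 - C t * X ^ i) =
      ∏ i ∈ Icc 1 m, (1 - C ((1 - u) * t) * X ^ i) := by
  rw [Nat.Partition.genFun_eq_prod_Icc fun i c ↦ boundedPartWeight_of_lt t u c, ← prod_mul_distrib]
  refine prod_congr rfl fun i hi ↦ ?_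
  simp_rw [boundedPartWeight_of_le t u _ (mem_Icc.1 hi).2]
  rw [mul_comm, one_sub_C_mul_X_pow_mul_one_add_tsum t u (by grind)]

end BoundedPartWeight

theorem sum_filter_lPart_eq_add_one {M : Type*} [AddCommGroup M] {n : ℕ} (f : n.Partition → M) (m : ℕ) :
    ∑ p ∈ univ.filter (fun p : n.Partition ↦ lPart p = m + 1), f p =
      ∑ p ∈ univ.filter (fun p : n.Partition ↦ lPart p ≤ m + 1), f p -
        ∑ p ∈ univ.filter (fun p : n.Partition ↦ lPart p ≤ m), f p := by
  rw [eq_sub_iff_add_eq, ← sum_union (disjoint_filter.2 fun _ _ h ↦ by omega), ← filter_or]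
  congr 1
  ext p
  simp only [mem_filter, mem_univ, true_and]
  omega

theorem largestPart_genFun_general (t u : ℂ) (m : ℕ) (hm : 1 ≤ m) (N : ℕ) :
    PowerSeries.coeff (R := ℂ) N
      (PowerSeries.C (R := ℂ) (t * u) * (PowerSeries.X : PowerSeries ℂ) ^ m *
        (∏ i ∈ Finset.Icc 1 (m - 1),
          (1 - PowerSeries.C (R := ℂ) ((1 - u) * t) * (PowerSeries.X : PowerSeries ℂ) ^ i)) *
        (∏ i ∈ Finset.Icc 1 m,
          (1 - PowerSeries.C (R := ℂ) t * (PowerSeries.X : PowerSeries ℂ) ^ i))⁻¹) =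
    ∑ π ∈ Finset.univ.filter (fun π : N.Partition => lPart π = m),
      t ^ kParts π * u ^ qParts π := by
  obtain ⟨n, rfl⟩ := Nat.exists_eq_add_one_of_ne_zero (by omega : m ≠ 0)
  rw [add_tsub_cancel_right]
  have hunit : constantCoeff (∏ i ∈ Icc 1 (n + 1), (1 - C t * X ^ i)) ≠ 0 := by
    rw [map_prod, prod_eq_one fun i hi ↦ by simp [Nat.one_le_iff_ne_zero.1 (mem_Icc.1 hi).1]]
    exact one_ne_zero
  have hdiff : C (t * u) * X ^ (n + 1) * (∏ i ∈ Icc 1 n, (1 - C ((1 - u) * t) * X ^ i)) *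
      (∏ i ∈ Icc 1 (n + 1), (1 - C t * X ^ i))⁻¹ =
      Nat.Partition.genFun (boundedPartWeight t u (n + 1)) -
        Nat.Partition.genFun (boundedPartWeight t u n) := by
    rw [eq_comm, eq_mul_inv_iff_mul_eq hunit, sub_mul, genFun_boundedPartWeight_mul_prod,
      prod_Icc_succ_top (by omega), prod_Icc_succ_top (by omega) (fun i ↦ 1 - C t * X ^ i),
      ← mul_assoc, genFun_boundedPartWeight_mul_prod]
    simp only [map_mul, map_sub, map_one]
    ring
  rw [hdiff, map_sub, coeff_genFun_boundedPartWeight, coeff_genFun_boundedPartWeight,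
    sum_filter_lPart_eq_add_one]

/-- Generating function for partitions with prescribed largest part `m`
(from the proof of Theorem 2). -/
theorem largestPart_genFun (t u : ℂ) (m : ℕ) (hm : 1 ≤ m) (N : ℕ) (hN : 1 ≤ N) :
    PowerSeries.coeff (R := ℂ) N
      (PowerSeries.C (R := ℂ) (t * u) * (PowerSeries.X : PowerSeries ℂ) ^ m *
        (∏ i ∈ Finset.Icc 1 (m - 1),
          (1 - PowerSeries.C (R := ℂ) ((1 - u) * t) * (PowerSeries.X : PowerSeries ℂ) ^ i)) *
        (∏ i ∈ Finset.Icc 1 m,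
          (1 - PowerSeries.C (R := ℂ) t * (PowerSeries.X : PowerSeries ℂ) ^ i))⁻¹) =
    ∑ π ∈ Finset.univ.filter (fun π : N.Partition => lPart π = m),
      t ^ kParts π * u ^ qParts π :=
  largestPart_genFun_general t u m hm N
end

section
/- Let t, u ∈ ℂ, let m ≥ 1 and 1 ≤ p ≤ m be integers, and let N ≥ 1 be an integer. Then the coefficient of q^N in the formal power series (over ℂ) t·u · q^m · (∏_{i=m−p+1}^{m−1} (1 − (1−u)·t·q^{i})) · (∏_{i=m−p+1}^{m} (1 − t·q^{i}))⁻¹ equals ∑_{π ∈ P(N), l(π) = m, s(π) ≥ m−p+1} t^{k(π)} u^{Q(π)}, the sum being over all partitions of N whose largest part equals m and whose smallest part is at least m − p + 1. (This is the generating-function identity established in the proof of Theorem 3.) -/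
open Finset PowerSeries

/-!
Give a part `i ∈ [a, b]` occurring `c` times the weight `u t^c`, and every other part weight `0`.
Then `Nat.Partition.genFun` sums `t^k(π) u^Q(π)` over the partitions with all parts in `[a, b]`,
and its product formula evaluates it to
`∏_{i=a}^{b} (1 + u ∑_{c ≥ 1} t^c q^{ic}) = ∏_{i=a}^{b} (1 - (1-u) t q^i) / (1 - t q^i)`.
The partitions with parts in `[a, m]` and largest part `m` are counted by the difference of the
cases `b = m` and `b = m - 1`, which is
`t u q^m ∏_{i=a}^{m-1} (1 - (1-u) t q^i) / ∏_{i=a}^{m} (1 - t q^i)`.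
-/

open PowerSeries.WithPiTopology

theorem Multiset.sup_mem_of_ne_zero {α : Type*} [LinearOrder α] [OrderBot α] {s : Multiset α}
    (hs : s ≠ 0) : s.sup ∈ s := by
  obtain ⟨i, hi, hsup⟩ := s.toFinset.exists_mem_eq_sup (Multiset.toFinset_nonempty.2 hs) id
  rw [Finset.sup_def, Multiset.toFinset_val, Multiset.map_id, Multiset.sup_dedup] at hsup
  rw [hsup]
  exact Multiset.mem_toFinset.1 hi

namespace Nat.Partition

theorem lPart_eq_and_le_sPart_iff {n a m : ℕ} (π : n.Partition) (ha : 1 ≤ a) :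
    lPart π = m ∧ a ≤ sPart π ↔ m ∈ π.parts ∧ ∀ i ∈ π.parts, i ∈ Icc a m := by
  rcases π.parts.empty_or_exists_mem with hempty | ⟨j, hj⟩
  · simp [sPart, hempty]
    omega
  have hne : π.parts.toFinset.Nonempty := ⟨j, Multiset.mem_toFinset.2 hj⟩
  have hs : sPart π = π.parts.toFinset.min' hne := by
    rw [sPart, ← Finset.coe_min' hne, WithTop.untopD_coe]
  rw [hs, Finset.le_min'_iff]
  simp only [Multiset.mem_toFinset, Finset.mem_Icc]
  constructor
  · rintro ⟨rfl, hle⟩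
    exact ⟨Multiset.sup_mem_of_ne_zero (fun h ↦ by simp [h] at hj),
      fun i hi ↦ ⟨hle i hi, Multiset.le_sup hi⟩⟩
  · rintro ⟨hm, hI⟩
    exact ⟨le_antisymm (Multiset.sup_le.2 fun i hi ↦ (hI i hi).2) (Multiset.le_sup hm),
      fun i hi ↦ (hI i hi).1⟩

section Weight

variable {R : Type*} [CommRing R]

def intervalWeight (t u : R) (a b i c : ℕ) : R := if i ∈ Icc a b then u * t ^ c else 0

theorem prod_intervalWeight {n : ℕ} (π : n.Partition) (t u : R) (a b : ℕ) :
    π.parts.toFinsupp.prod (intervalWeight t u a b) =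
      if ∀ i ∈ π.parts, i ∈ Icc a b then t ^ kParts π * u ^ qParts π else 0 := by
  simp only [Finsupp.prod, Multiset.toFinsupp_support, Multiset.toFinsupp_apply, intervalWeight,
    prod_ite_zero, Multiset.mem_toFinset]
  rw [prod_mul_distrib, prod_const, prod_pow_eq_pow_sum, Multiset.toFinset_sum_count_eq,
    kParts, qParts, mul_comm]

variable [TopologicalSpace R]

theorem one_add_tsum_intervalWeight_of_notMem {t u : R} {a b i : ℕ} (hi : i ∉ Icc a b) :
    1 + ∑' j, intervalWeight t u a b i (j + 1) • (X : R⟦X⟧) ^ (i * (j + 1)) = 1 := by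
  simp [intervalWeight, hi]

theorem one_add_tsum_intervalWeight_mul [IsTopologicalRing R] [T2Space R] {t u : R} {a b i : ℕ}
    (hi : i ∈ Icc a b) (hi0 : i ≠ 0) :
    (1 + ∑' j, intervalWeight t u a b i (j + 1) • (X : R⟦X⟧) ^ (i * (j + 1))) *
      (1 - C t * X ^ i) = 1 - C ((1 - u) * t) * X ^ i := by
  set f : R⟦X⟧ := C t * X ^ i
  have hf : constantCoeff f = 0 := by simp [f, hi0]
  have hterm (j : ℕ) :
      intervalWeight t u a b i (j + 1) • (X : R⟦X⟧) ^ (i * (j + 1)) = C u * f * f ^ j := by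
    simp only [intervalWeight, if_pos hi, smul_eq_C_mul, f, map_mul, map_pow, mul_pow, pow_mul,
      pow_succ]
    ring
  rw [tsum_congr hterm, ((summable_pow_of_constantCoeff_eq_zero hf).hasSum.mul_left _).tsum_eq,
    map_mul, map_sub, map_one]
  linear_combination (C u * f) * tsum_pow_mul_one_sub_of_constantCoeff_eq_zero hf

theorem genFun_intervalWeight [T2Space R] {t u : R} {a : ℕ} (b : ℕ) (ha : 1 ≤ a) :
    genFun (intervalWeight t u a b) =
      ∏ i ∈ Icc a b, (1 + ∑' j, intervalWeight t u a b i (j + 1) • (X : R⟦X⟧) ^ (i * (j + 1))) := by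
  set F : ℕ → R⟦X⟧ := fun i ↦ 1 + ∑' j, intervalWeight t u a b i (j + 1) • X ^ (i * (j + 1))
  have hF : ∀ i ∉ Icc a b, F i = 1 := fun i hi ↦ one_add_tsum_intervalWeight_of_notMem hi
  have hprod : HasProd (fun i ↦ F (i + 1)) (∏ i ∈ range b, F (i + 1)) :=
    hasProd_prod_of_ne_finset_one fun i hi ↦ hF _ (by simp at hi ⊢; omega)
  rw [(hasProd_genFun _).unique hprod, ← mul_one (∏ i ∈ range b, F (i + 1)),
    ← hF 0 (by simp; omega), ← prod_range_succ']
  exact (prod_subset (fun i hi ↦ by simp at hi ⊢; omega) fun i _ hi ↦ hF i hi).symm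

end Weight

theorem genFun_intervalWeight_mul_prod {R : Type*} [CommRing R] (t u : R) {a : ℕ} (b : ℕ)
    (ha : 1 ≤ a) :
    genFun (intervalWeight t u a b) * ∏ i ∈ Icc a b, (1 - C t * X ^ i) =
      ∏ i ∈ Icc a b, (1 - C ((1 - u) * t) * X ^ i) := by
  -- The identity is algebraic; any Hausdorff ring topology on `R` lets us use `hasProd_genFun`.
  let _ : TopologicalSpace R := ⊥
  have : DiscreteTopology R := ⟨rfl⟩
  rw [genFun_intervalWeight b ha, ← prod_mul_distrib]
  exact prod_congr rfl fun i hi ↦ one_add_tsum_intervalWeight_mul hi (by simp at hi; omega)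

theorem C_mul_X_pow_mul_prod_mul_inv_prod_eq_genFun_sub {K : Type*} [Field K] (t u : K)
    {a m : ℕ} (ha : 1 ≤ a) (ham : a ≤ m) :
    C (t * u) * X ^ m * (∏ i ∈ Icc a (m - 1), (1 - C ((1 - u) * t) * X ^ i)) *
        (∏ i ∈ Icc a m, (1 - C t * X ^ i))⁻¹ =
      genFun (intervalWeight t u a m) - genFun (intervalWeight t u a (m - 1)) := by
  have hunit : constantCoeff (∏ i ∈ Icc a m, (1 - C t * X ^ i)) ≠ 0 := by
    rw [map_prod, prod_eq_one fun i hi ↦ by simp at hi; simp [show i ≠ 0 by omega]]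
    exact one_ne_zero
  have hIcc : Icc a m = insert m (Icc a (m - 1)) := by
    ext i
    simp only [mem_Icc, mem_insert]
    omega
  have hm : m ∉ Icc a (m - 1) := by simp; omega
  have hsmall := genFun_intervalWeight_mul_prod t u (m - 1) ha
  have hlarge := genFun_intervalWeight_mul_prod t u m ha
  rw [hIcc, prod_insert hm, prod_insert hm] at hlarge
  rw [eq_comm, eq_mul_inv_iff_mul_eq hunit, hIcc, prod_insert hm]
  simp only [map_mul, map_sub, map_one] at hsmall hlarge ⊢
  linear_combination hlarge - (1 - C t * X ^ m) * hsmall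

theorem coeff_genFun_intervalWeight_sub {R : Type*} [CommRing R] (t u : R) {a : ℕ} (m N : ℕ)
    (ha : 1 ≤ a) :
    coeff N (genFun (intervalWeight t u a m) - genFun (intervalWeight t u a (m - 1))) =
      ∑ π ∈ univ.filter (fun π : N.Partition ↦ lPart π = m ∧ a ≤ sPart π),
        t ^ kParts π * u ^ qParts π := by
  rw [map_sub, coeff_genFun, coeff_genFun, ← sum_sub_distrib, sum_filter]
  refine sum_congr rfl fun π _ ↦ ?_
  have hbelow : (∀ i ∈ π.parts, i ∈ Icc a (m - 1)) ↔
      (∀ i ∈ π.parts, i ∈ Icc a m) ∧ m ∉ π.parts := by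
    simp only [mem_Icc]
    grind
  simp only [prod_intervalWeight, lPart_eq_and_le_sPart_iff π ha, hbelow]
  split_ifs <;> simp_all

end Nat.Partition

theorem truncated_genFun_general (t u : ℂ) (m p : ℕ) (hp : 1 ≤ p) (hpm : p ≤ m) (N : ℕ) :
    PowerSeries.coeff N
      (PowerSeries.C (t * u) * (PowerSeries.X : PowerSeries ℂ) ^ m *
        (∏ i ∈ Finset.Icc (m - p + 1) (m - 1),
          (1 - PowerSeries.C ((1 - u) * t) * (PowerSeries.X : PowerSeries ℂ) ^ i)) *
        (∏ i ∈ Finset.Icc (m - p + 1) m,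
          (1 - PowerSeries.C t * (PowerSeries.X : PowerSeries ℂ) ^ i))⁻¹) =
    ∑ π ∈ Finset.univ.filter
        (fun π : N.Partition => lPart π = m ∧ m - p + 1 ≤ sPart π),
      t ^ kParts π * u ^ qParts π := by
  rw [Nat.Partition.C_mul_X_pow_mul_prod_mul_inv_prod_eq_genFun_sub t u (by omega) (by omega),
    Nat.Partition.coeff_genFun_intervalWeight_sub t u m N (by omega)]

/-- Generating function for partitions with largest part `m` and smallest part at least
`m - p + 1` (from the proof of Theorem 3). -/
theorem truncated_genFun (t u : ℂ) (m p : ℕ) (hp : 1 ≤ p) (hpm : p ≤ m) (N : ℕ) (hN : 1 ≤ N) :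
    PowerSeries.coeff N
      (PowerSeries.C (t * u) * (PowerSeries.X : PowerSeries ℂ) ^ m *
        (∏ i ∈ Finset.Icc (m - p + 1) (m - 1),
          (1 - PowerSeries.C ((1 - u) * t) * (PowerSeries.X : PowerSeries ℂ) ^ i)) *
        (∏ i ∈ Finset.Icc (m - p + 1) m,
          (1 - PowerSeries.C t * (PowerSeries.X : PowerSeries ℂ) ^ i))⁻¹) =
    ∑ π ∈ Finset.univ.filter
        (fun π : N.Partition => lPart π = m ∧ m - p + 1 ≤ sPart π),
      t ^ kParts π * u ^ qParts π :=
  truncated_genFun_general t u m p hp hpm N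
end
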